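/- arXiv:0801.2818 — 2 statements merged into one kernel-verified Lean document; each statement's English description precedes it below -/
import Mathlib

section
/- For every n ∈ ℕ, Σ_{λ ∈ P_n} ℓ(λ) = Σ_{λ ∈ P_n} (ℓ((λ^r)~) + ℓ(λ^e)), where (λ^r)~ is the image of the strict partition λ^r under the Glaisher map. -/
open scoped BigOperators Classical

/-- `mr s` is the multiset of parts of `s` having odd multiplicity, each taken once:
the partition `λ^r`. -/
def mr (s : Multiset ℕ) : Multiset ℕ := s.dedup.filter fun i => ¬ Even (s.count i)

/-- `md s` has each part `i` with multiplicity `⌊m_i(s)/2⌋`: the partition `λ^d`. -/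
def md (s : Multiset ℕ) : Multiset ℕ :=
  s.dedup.bind fun i => Multiset.replicate (s.count i / 2) i

/-- `mo s` is the multiset of odd parts of `s`: the partition `λ^o`. -/
def mo (s : Multiset ℕ) : Multiset ℕ := s.filter fun i => ¬ Even i

/-- `me s` is the multiset of halves of the even parts of `s`: the partition `λ^e`. -/
def me (s : Multiset ℕ) : Multiset ℕ := (s.filter fun i => Even i).map (· / 2)

/-- The Glaisher map: a part `a = 2^p * q` (`q` odd) contributes `2^p` copies of `q`. -/
def glaisher (s : Multiset ℕ) : Multiset ℕ :=
  s.bind fun a => Multiset.replicate (2 ^ (a.factorization 2)) (a / 2 ^ (a.factorization 2))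

/-- `IsPartitionOf n s` : `s` is a partition of `n` (all parts positive, sum `n`). -/
def IsPartitionOf (n : ℕ) (s : Multiset ℕ) : Prop := (∀ i ∈ s, 0 < i) ∧ s.sum = n


-- aux lemmas
lemma count_dedup_bind_replicate (s : Multiset ℕ) (c : ℕ → ℕ) (j : ℕ) :
    ((s.dedup.bind fun i => Multiset.replicate (c i) i).count j) = if j ∈ s then c j else 0 := by
  rw [Multiset.count_bind]
  have h1 : (Multiset.map (fun b => Multiset.count j (Multiset.replicate (c b) b)) s.dedup)
      = Multiset.map (fun b => if j = b then c b else 0) s.dedup := by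
    apply Multiset.map_congr rfl
    intro b _
    rw [Multiset.count_replicate]
    simp [eq_comm]
  rw [h1]
  have h2 : (Multiset.map (fun b => if j = b then c b else 0) s.dedup).sum
      = ∑ b ∈ s.toFinset, if j = b then c b else 0 := rfl
  rw [h2, Finset.sum_ite_eq]
  simp [Multiset.mem_toFinset]

lemma count_mr (s : Multiset ℕ) (i : ℕ) : (mr s).count i = s.count i % 2 := by
  unfold mr
  rw [Multiset.count_filter]
  by_cases he : Even (s.count i)
  · simp [he, Nat.even_iff.mp he]
  · have hc : 0 < s.count i := by
      rcases Nat.eq_zero_or_pos (s.count i) with h | h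
      · exact absurd (h ▸ Even.zero) he
      · exact h
    have hm : i ∈ s := Multiset.count_pos.mp hc
    rw [if_pos he, Multiset.count_dedup, if_pos hm, Nat.odd_iff.mp (Nat.not_even_iff_odd.mp he)]

lemma count_md (s : Multiset ℕ) (i : ℕ) : (md s).count i = s.count i / 2 := by
  unfold md
  rw [count_dedup_bind_replicate]
  split_ifs with h
  · rfl
  · rw [Multiset.count_eq_zero_of_notMem h]

lemma mr_add_md_add_md (s : Multiset ℕ) : mr s + (md s + md s) = s := by
  ext i
  simp only [Multiset.count_add, count_mr, count_md]
  omega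

lemma sum_glaisher (s : Multiset ℕ) : (glaisher s).sum = s.sum := by
  unfold glaisher
  rw [Multiset.sum_bind]
  have h : ∀ a ∈ s, (Multiset.replicate (2 ^ (a.factorization 2)) (a / 2 ^ (a.factorization 2))).sum = a := by
    intro a _
    rw [Multiset.sum_replicate, smul_eq_mul]
    exact Nat.ordProj_mul_ordCompl_eq_self a 2
  rw [Multiset.map_congr rfl h]
  simp

lemma mem_glaisher {s : Multiset ℕ} {x : ℕ} (hx : x ∈ glaisher s) :
    ∃ a ∈ s, x = a / 2 ^ (a.factorization 2) := by
  unfold glaisher at hx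
  rw [Multiset.mem_bind] at hx
  obtain ⟨a, ha, hxa⟩ := hx
  exact ⟨a, ha, Multiset.eq_of_mem_replicate hxa⟩

lemma glaisher_odd {s : Multiset ℕ} (hs : ∀ i ∈ s, 0 < i) {x : ℕ} (hx : x ∈ glaisher s) :
    ¬ Even x := by
  obtain ⟨a, ha, rfl⟩ := mem_glaisher hx
  have h2 := Nat.not_dvd_ordCompl Nat.prime_two (hs a ha).ne'
  intro he
  exact h2 he.two_dvd

lemma glaisher_pos {s : Multiset ℕ} (hs : ∀ i ∈ s, 0 < i) {x : ℕ} (hx : x ∈ glaisher s) :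
    0 < x := by
  obtain ⟨a, ha, rfl⟩ := mem_glaisher hx
  exact Nat.ordCompl_pos 2 (hs a ha).ne'

lemma mem_mr {s : Multiset ℕ} {x : ℕ} (hx : x ∈ mr s) : x ∈ s := by
  unfold mr at hx
  rw [Multiset.mem_filter, Multiset.mem_dedup] at hx
  exact hx.1

lemma mem_md {s : Multiset ℕ} {x : ℕ} (hx : x ∈ md s) : x ∈ s := by
  rw [← Multiset.count_pos, count_md] at hx
  rw [← Multiset.count_pos]
  omega

def unglaisher (s : Multiset ℕ) : Multiset ℕ :=
  s.dedup.bind fun q => (((s.count q).bitIndices.map fun p => 2 ^ p * q : List ℕ) : Multiset ℕ)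

lemma glaisher_unglaisher {s : Multiset ℕ} (hs : ∀ i ∈ s, ¬ Even i) :
    glaisher (unglaisher s) = s := by
  have key : ∀ q ∈ s, glaisher (((s.count q).bitIndices.map fun p => 2 ^ p * q : List ℕ) : Multiset ℕ)
      = Multiset.replicate (s.count q) q := by
    intro q hq
    have hq1 : ¬ (2 ∣ q) := by
      intro hd
      exact hs q hq ((even_iff_two_dvd).mpr hd)
    have hq0 : q ≠ 0 := by rintro rfl; exact hq1 ⟨0, rfl⟩
    have hfact : ∀ p : ℕ, (2 ^ p * q).factorization 2 = p := by
      intro p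
      rw [Nat.factorization_mul (pow_ne_zero p two_ne_zero) hq0]
      rw [Nat.Prime.factorization_pow Nat.prime_two]
      simp [Nat.factorization_eq_zero_of_not_dvd hq1]
    have hdiv : ∀ p : ℕ, (2 ^ p * q) / 2 ^ p = q := fun p =>
      Nat.mul_div_cancel_left q (pow_pos two_pos p)
    unfold glaisher
    rw [Multiset.eq_replicate]
    constructor
    · rw [Multiset.card_bind, Multiset.map_coe, Multiset.sum_coe, List.map_map]
      have hcongr : ((s.count q).bitIndices.map ((Multiset.card ∘ fun a =>
            Multiset.replicate (2 ^ a.factorization 2) (a / 2 ^ a.factorization 2)) ∘ fun p => 2 ^ p * q))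
          = ((s.count q).bitIndices.map fun p => 2 ^ p) := by
        apply List.map_congr_left
        intro p _
        simp [hfact p]
      rw [hcongr]
      exact Nat.twoPowSum_bitIndices _
    · intro b hb
      rw [Multiset.mem_bind] at hb
      obtain ⟨a, ha, hab⟩ := hb
      rw [Multiset.mem_coe, List.mem_map] at ha
      obtain ⟨p, _, rfl⟩ := ha
      have := Multiset.eq_of_mem_replicate hab
      rw [this, hfact p, hdiv p]
  unfold unglaisher glaisher
  rw [Multiset.bind_assoc]
  have h2 : ∀ q ∈ s.dedup, ((((s.count q).bitIndices.map fun p => 2 ^ p * q : List ℕ) : Multiset ℕ).bind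
      fun a => Multiset.replicate (2 ^ a.factorization 2) (a / 2 ^ a.factorization 2))
      = Multiset.replicate (s.count q) q := by
    intro q hq
    exact key q (Multiset.mem_dedup.mp hq)
  rw [Multiset.bind_congr h2]
  ext j
  rw [count_dedup_bind_replicate]
  split_ifs with h
  · rfl
  · rw [Multiset.count_eq_zero_of_notMem h]

lemma unglaisher_pos {s : Multiset ℕ} (hs : ∀ i ∈ s, ¬ Even i) {x : ℕ}
    (hx : x ∈ unglaisher s) : 0 < x := by
  unfold unglaisher at hx
  rw [Multiset.mem_bind] at hx
  obtain ⟨q, hq, hxq⟩ := hx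
  rw [Multiset.mem_coe, List.mem_map] at hxq
  obtain ⟨p, _, rfl⟩ := hxq
  have hq0 : q ≠ 0 := by
    rintro rfl
    exact hs 0 (Multiset.mem_dedup.mp hq) Even.zero
  positivity

lemma unglaisher_nodup {s : Multiset ℕ} (hs : ∀ i ∈ s, ¬ Even i) : (unglaisher s).Nodup := by
  unfold unglaisher
  rw [Multiset.nodup_bind]
  have oddfact : ∀ q ∈ s, ∀ p : ℕ, (2 ^ p * q).factorization 2 = p := by
    intro q hq p
    have hq1 : ¬ (2 ∣ q) := fun hd => hs q hq ((even_iff_two_dvd).mpr hd)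
    have hq0 : q ≠ 0 := by rintro rfl; exact hq1 ⟨0, rfl⟩
    rw [Nat.factorization_mul (pow_ne_zero p two_ne_zero) hq0,
      Nat.Prime.factorization_pow Nat.prime_two]
    simp [Nat.factorization_eq_zero_of_not_dvd hq1]
  constructor
  · intro q hq
    rw [Multiset.coe_nodup]
    apply List.Nodup.map_on
    · intro p1 _ p2 _ h
      have h1 := oddfact q (Multiset.mem_dedup.mp hq) p1
      have h2 := oddfact q (Multiset.mem_dedup.mp hq) p2
      rw [h] at h1
      rw [h2] at h1
      exact h1.symm ▸ rfl
    · exact (Nat.bitIndices_sorted).nodup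
  · apply Multiset.Nodup.pairwise _ (Multiset.nodup_dedup s)
    intro q1 hq1 q2 hq2 hne
    rw [Function.onFun]
    rw [Multiset.disjoint_left]
    intro x hx1 hx2
    rw [Multiset.mem_coe, List.mem_map] at hx1 hx2
    obtain ⟨p1, _, rfl⟩ := hx1
    obtain ⟨p2, _, h⟩ := hx2
    have e1 := oddfact q1 (Multiset.mem_dedup.mp hq1) p1
    have e2 := oddfact q2 (Multiset.mem_dedup.mp hq2) p2
    have : q1 = q2 := by
      have d1 : (2 ^ p1 * q1) / 2 ^ ((2 ^ p1 * q1).factorization 2) = q1 := by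
        rw [e1]; exact Nat.mul_div_cancel_left q1 (pow_pos two_pos p1)
      have d2 : (2 ^ p2 * q2) / 2 ^ ((2 ^ p2 * q2).factorization 2) = q2 := by
        rw [e2]; exact Nat.mul_div_cancel_left q2 (pow_pos two_pos p2)
      rw [← d1, ← d2, h]
    exact hne this

lemma sum_unglaisher {s : Multiset ℕ} (hs : ∀ i ∈ s, ¬ Even i) :
    (unglaisher s).sum = s.sum := by
  conv_rhs => rw [← glaisher_unglaisher hs]
  rw [sum_glaisher]

lemma map_two_me (s : Multiset ℕ) : (me s).map (2 * ·) = s.filter (fun i => Even i) := by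
  unfold me
  rw [Multiset.map_map]
  have h : ∀ i ∈ s.filter (fun i => Even i), ((2 * ·) ∘ (· / 2)) i = i := by
    intro i hi
    have he : Even i := (Multiset.mem_filter.mp hi).2
    exact Nat.two_mul_div_two_of_even he
  rw [Multiset.map_congr rfl h]
  simp

lemma mo_odd (s : Multiset ℕ) : ∀ i ∈ mo s, ¬ Even i := by
  intro i hi
  exact (Multiset.mem_filter.mp hi).2

lemma mo_add_filter (s : Multiset ℕ) : mo s + s.filter (fun i => Even i) = s := by
  unfold mo
  rw [add_comm]
  exact Multiset.filter_add_not _ s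

-- F on multisets
def Fm (s : Multiset ℕ) : Multiset ℕ := glaisher (mr s) + (md s).map (2 * ·)

lemma Fm_pos {s : Multiset ℕ} (hs : ∀ i ∈ s, 0 < i) : ∀ x ∈ Fm s, 0 < x := by
  intro x hx
  rcases Multiset.mem_add.mp hx with h | h
  · exact glaisher_pos (fun i hi => hs i (mem_mr hi)) h
  · obtain ⟨i, hi, rfl⟩ := Multiset.mem_map.mp h
    have := hs i (mem_md hi)
    omega

lemma Fm_sum (s : Multiset ℕ) : (Fm s).sum = s.sum := by
  unfold Fm
  rw [Multiset.sum_add, sum_glaisher]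
  have h2 : ((md s).map (2 * ·)).sum = 2 * (md s).sum := by
    have := Multiset.sum_map_mul_left (a := (2:ℕ)) (s := md s) (f := id)
    simpa using this
  rw [h2]
  conv_rhs => rw [← mr_add_md_add_md s]
  rw [Multiset.sum_add, Multiset.sum_add]
  ring

lemma mo_Fm {s : Multiset ℕ} (hs : ∀ i ∈ s, 0 < i) : mo (Fm s) = glaisher (mr s) := by
  unfold mo Fm
  rw [Multiset.filter_add]
  rw [Multiset.filter_eq_self.mpr (fun a ha => glaisher_odd (fun i hi => hs i (mem_mr hi)) ha)]
  have : Multiset.filter (fun i => ¬ Even i) ((md s).map (2 * ·)) = 0 := by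
    rw [Multiset.filter_eq_nil]
    intro a ha
    obtain ⟨i, _, rfl⟩ := Multiset.mem_map.mp ha
    simp [even_two_mul]
  rw [this, add_zero]

lemma me_Fm {s : Multiset ℕ} (hs : ∀ i ∈ s, 0 < i) : me (Fm s) = md s := by
  unfold me Fm
  rw [Multiset.filter_add]
  have h1 : Multiset.filter (fun i => Even i) (glaisher (mr s)) = 0 := by
    rw [Multiset.filter_eq_nil]
    exact fun a ha => glaisher_odd (fun i hi => hs i (mem_mr hi)) ha
  have h2 : Multiset.filter (fun i => Even i) ((md s).map (2 * ·)) = (md s).map (2 * ·) := by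
    rw [Multiset.filter_eq_self]
    intro a ha
    obtain ⟨i, _, rfl⟩ := Multiset.mem_map.mp ha
    exact even_two_mul i
  rw [h1, h2, zero_add, Multiset.map_map]
  have h3 : ∀ i ∈ md s, ((· / 2) ∘ (2 * ·)) i = i := by
    intro i _
    simp only [Function.comp_apply]
    omega
  rw [Multiset.map_congr rfl h3]
  simp

lemma mr_nodup_add (u v : Multiset ℕ) (hu : u.Nodup) : mr (u + (v + v)) = u := by
  rw [Multiset.nodup_iff_count_le_one] at hu
  ext i
  rw [count_mr]
  simp only [Multiset.count_add]
  have := hu i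
  omega

lemma md_nodup_add (u v : Multiset ℕ) (hu : u.Nodup) : md (u + (v + v)) = v := by
  rw [Multiset.nodup_iff_count_le_one] at hu
  ext i
  rw [count_md]
  simp only [Multiset.count_add]
  have := hu i
  omega

def Fp {n : ℕ} (l : Nat.Partition n) : Nat.Partition n where
  parts := Fm l.parts
  parts_pos := fun hi => Fm_pos (fun i h => l.parts_pos h) _ hi
  parts_sum := by rw [Fm_sum]; exact l.parts_sum

def Gp {n : ℕ} (l : Nat.Partition n) : Nat.Partition n where
  parts := unglaisher (mo l.parts) + (me l.parts + me l.parts)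
  parts_pos := by
    intro i hi
    rcases Multiset.mem_add.mp hi with h | h
    · exact unglaisher_pos (mo_odd l.parts) h
    · have hme : i ∈ me l.parts := by
        rcases Multiset.mem_add.mp h with h' | h' <;> exact h'
      obtain ⟨j, hj, rfl⟩ := Multiset.mem_map.mp hme
      have hje : Even j := (Multiset.mem_filter.mp hj).2
      have hjp : 0 < j := l.parts_pos (Multiset.mem_filter.mp hj).1
      obtain ⟨k, rfl⟩ := hje
      omega
  parts_sum := by
    rw [Multiset.sum_add, sum_unglaisher (mo_odd l.parts), Multiset.sum_add]
    have h2 : (me l.parts).sum + (me l.parts).sum = (l.parts.filter (fun i => Even i)).sum := by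
      have := congrArg Multiset.sum (map_two_me l.parts)
      have h3 : ((me l.parts).map (2 * ·)).sum = 2 * (me l.parts).sum := by
        have := Multiset.sum_map_mul_left (a := (2:ℕ)) (s := me l.parts) (f := id)
        simpa using this
      omega
    rw [h2, ← Multiset.sum_add, mo_add_filter]
    exact l.parts_sum

lemma Fp_surjective (n : ℕ) : Function.Surjective (Fp (n := n)) := by
  intro μ
  refine ⟨Gp μ, ?_⟩
  apply Nat.Partition.ext
  show Fm (Gp μ).parts = μ.parts
  have hnodup : (unglaisher (mo μ.parts)).Nodup := unglaisher_nodup (mo_odd μ.parts)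
  have hparts : (Gp μ).parts = unglaisher (mo μ.parts) + (me μ.parts + me μ.parts) := rfl
  unfold Fm
  rw [hparts, mr_nodup_add _ _ hnodup, md_nodup_add _ _ hnodup,
    glaisher_unglaisher (mo_odd μ.parts), map_two_me, mo_add_filter]

lemma card_parts_eq (s : Multiset ℕ) :
    Multiset.card s = Multiset.card (mo s) + Multiset.card (me s) := by
  unfold mo me
  rw [Multiset.card_map]
  have := congrArg Multiset.card (Multiset.filter_add_not (fun i => Even i) s)
  rw [Multiset.card_add] at this
  omega


/-- `Σ_{λ ∈ P_n} ℓ(λ) = Σ_{λ ∈ P_n} (ℓ((λ^r)~) + ℓ(λ^e))`,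
where `(λ^r)~` is the image of `λ^r` under the Glaisher map. -/
theorem sum_length_eq_glaisher_r_e (n : ℕ) :
    ∑ l : Nat.Partition n, Multiset.card l.parts =
      ∑ l : Nat.Partition n,
        (Multiset.card (glaisher (mr l.parts)) + Multiset.card (me l.parts)) := by
  have hbij : Function.Bijective (Fp (n := n)) :=
    Finite.surjective_iff_bijective.mp (Fp_surjective n)
  have key : ∑ l : Nat.Partition n, Multiset.card (glaisher (mr l.parts))
      = ∑ l : Nat.Partition n, Multiset.card (mo l.parts) := by
    apply Fintype.sum_bijective (Fp (n := n)) hbij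
    intro l
    rw [show (Fp l).parts = Fm l.parts from rfl, mo_Fm (fun i h => l.parts_pos h)]
  rw [Finset.sum_add_distrib, key, ← Finset.sum_add_distrib]
  apply Finset.sum_congr rfl
  intro l _
  exact card_parts_eq l.parts
end

section
/- Let a finite index set X carry a partial order ≥ (dominance order on P_n) and let Y ⊆ X (Y = SP_n). Let D = (d_{λμ}) and G = (γ_{λμ}) be X × Y integer matrices satisfying: d_{λμ} = 0 unless μ ≥ λ, d_{μμ} = 1 for μ ∈ Y, γ_{λμ} = 0 unless μ ≥ λ, and γ_{μμ} = 1 for μ ∈ Y. If T is a Y × Y matrix over ℚ with G = D·T, then T is an integer matrix which is lower unitriangular with respect to any total order on Y refining ≥; consequently the matrices ᵗD·D and ᵗG·G have the same elementary divisors over ℤ. -/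
/-!
Restricting `G = D T` to the rows indexed by `Y` gives `D_Y T = G_Y`, where `D_Y` and `G_Y` are
integer matrices that are unitriangular for the partial order. Such matrices are closed under
products and inverses (the determinant is `1`), so `T = D_Y⁻¹ G_Y` is an integer unitriangular
matrix with `det T = 1`. Then `G = D T` over `ℤ`, and `ᵗG G = ᵗT (ᵗD D) T` is an equivalence
over `ℤ`.
-/

open Matrix

namespace Matrix

theorem eq_map_inv_mul_of_map_mul_eq {ι κ R S : Type*} [Fintype ι] [DecidableEq ι] [Fintype κ]
    [CommRing R] [CommRing S] (f : R →+* S) {A : Matrix ι ι R} {B : Matrix ι κ R} {T : Matrix ι κ S}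
    (hA : IsUnit A.det) (h : A.map f * T = B.map f) : T = (A⁻¹ * B).map f := by
  have hAf : IsUnit (A.map f).det := by
    rw [← RingHom.mapMatrix_apply, ← RingHom.map_det]; exact hA.map f
  calc T = (A.map f)⁻¹ * (A.map f * T) := (nonsing_inv_mul_cancel_left _ _ hAf).symm
    _ = (A.map f)⁻¹ * (A.map f * (A⁻¹ * B).map f) := by
      rw [h, ← Matrix.map_mul, mul_nonsing_inv_cancel_left _ _ hA]
    _ = (A⁻¹ * B).map f := nonsing_inv_mul_cancel_left _ _ hAf

variable {ι R : Type*} [PartialOrder ι] [CommRing R]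

/-- Upper unitriangularity with respect to a partial order: unlike `Matrix.IsUpperTriangular`,
entries at incomparable positions must vanish too. -/
structure IsUnitriangular (M : Matrix ι ι R) : Prop where
  le_of_ne_zero : ∀ ⦃i j⦄, M i j ≠ 0 → i ≤ j
  diag_eq_one : ∀ i, M i i = 1

theorem mul_apply_self_of_le_of_ne_zero [Fintype ι] {M N : Matrix ι ι R}
    (hM : ∀ ⦃i j⦄, M i j ≠ 0 → i ≤ j) (hN : ∀ ⦃i j⦄, N i j ≠ 0 → i ≤ j) (i : ι) :
    (M * N) i i = M i i * N i i := by
  refine Finset.sum_eq_single i (fun k _ hki => ?_) (by simp)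
  by_contra hk
  exact hki (le_antisymm (hN (right_ne_zero_of_mul hk)) (hM (left_ne_zero_of_mul hk)))

theorem blockTriangular_not_le_of_le_of_ne_zero {M : Matrix ι ι R}
    (hM : ∀ ⦃i j⦄, M i j ≠ 0 → i ≤ j) (c : ι) : M.BlockTriangular (fun i => ¬ i ≤ c) := by
  intro i j hji
  obtain ⟨hic, hjc⟩ := Classical.not_imp.1 (lt_iff_le_not_ge.1 hji).2
  by_contra h
  exact hic ((hM h).trans (not_not.1 hjc))

namespace IsUnitriangular

variable [Fintype ι] {M N : Matrix ι ι R}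

theorem mul (hM : M.IsUnitriangular) (hN : N.IsUnitriangular) : (M * N).IsUnitriangular where
  le_of_ne_zero i j h := by
    obtain ⟨k, -, hk⟩ := Finset.exists_ne_zero_of_sum_ne_zero h
    exact (hM.le_of_ne_zero (left_ne_zero_of_mul hk)).trans
      (hN.le_of_ne_zero (right_ne_zero_of_mul hk))
  diag_eq_one i := by
    rw [mul_apply_self_of_le_of_ne_zero hM.le_of_ne_zero hN.le_of_ne_zero, hM.diag_eq_one,
      hN.diag_eq_one, one_mul]

variable [DecidableEq ι]

theorem det_eq_one (hM : M.IsUnitriangular) : M.det = 1 := by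
  let e : ι ≃ LinearExtension ι := Equiv.refl ι
  let : Fintype (LinearExtension ι) := Fintype.ofEquiv ι e
  have htri : (reindex e e M).IsUpperTriangular := fun i j hji => by
    by_contra h
    exact (toLinearExtension.monotone (hM.le_of_ne_zero h)).not_gt hji
  rw [← det_reindex_self e, det_of_isUpperTriangular htri]
  exact Finset.prod_eq_one fun i _ => hM.diag_eq_one (e.symm i)

theorem isUnit_det (hM : M.IsUnitriangular) : IsUnit M.det :=
  hM.det_eq_one ▸ isUnit_one

theorem inv (hM : M.IsUnitriangular) : M⁻¹.IsUnitriangular := by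
  let := invertibleOfIsUnitDet M hM.isUnit_det
  -- Mathlib's inverse lemma needs linearly ordered blocks: split the indices at `j`.
  have hle : ∀ ⦃i j⦄, M⁻¹ i j ≠ 0 → i ≤ j := fun i j h => by
    by_contra hij
    refine h (blockTriangular_inv_of_blockTriangular
      (blockTriangular_not_le_of_le_of_ne_zero hM.le_of_ne_zero j) ?_)
    exact lt_iff_le_not_ge.2 ⟨fun _ => hij, fun h => h hij le_rfl⟩
  refine ⟨hle, fun i => ?_⟩
  have := congr_fun₂ (mul_nonsing_inv M hM.isUnit_det) i i
  rwa [mul_apply_self_of_le_of_ne_zero hM.le_of_ne_zero hle, hM.diag_eq_one, one_mul,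
    one_apply_eq] at this

end IsUnitriangular

end Matrix

/-- let a finite index set `X` carry a partial order (dominance order)
and `Y ⊆ X`.  If the integer matrices `D = (d_{λμ})` and `G = (γ_{λμ})` (rows `X`,
columns `Y`) satisfy `d_{λμ} = 0` unless `μ ≥ λ`, `d_{μμ} = 1`, `γ_{λμ} = 0` unless
`μ ≥ λ`, `γ_{μμ} = 1`, and `T` is a rational `Y × Y` matrix with `G = D·T`, then `T`
is integral and lower unitriangular with respect to any total order refining `≥`
(i.e. `T_{μμ} = 1` and `T_{νμ} = 0` unless `μ ≥ ν`); consequently `ᵗD·D` and `ᵗG·G`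
have the same elementary divisors over `ℤ` (i.e. they are equivalent over `ℤ`). -/
theorem decomposition_triangular_transition
    {X : Type*} [Fintype X] [DecidableEq X] [PartialOrder X]
    (Y : Finset X)
    (D G : Matrix X {y : X // y ∈ Y} ℤ)
    (hD0 : ∀ (l : X) (m : {y : X // y ∈ Y}), D l m ≠ 0 → l ≤ (m : X))
    (hD1 : ∀ m : {y : X // y ∈ Y}, D (m : X) m = 1)
    (hG0 : ∀ (l : X) (m : {y : X // y ∈ Y}), G l m ≠ 0 → l ≤ (m : X))
    (hG1 : ∀ m : {y : X // y ∈ Y}, G (m : X) m = 1)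
    (T : Matrix {y : X // y ∈ Y} {y : X // y ∈ Y} ℚ)
    (hT : G.map ((↑) : ℤ → ℚ) = D.map ((↑) : ℤ → ℚ) * T) :
    (∀ i j, ∃ k : ℤ, T i j = (k : ℚ)) ∧
    (∀ i, T i i = 1) ∧
    (∀ i j, T i j ≠ 0 → (i : X) ≤ (j : X)) ∧
    ∃ U V : Matrix {y : X // y ∈ Y} {y : X // y ∈ Y} ℤ,
      IsUnit U.det ∧ IsUnit V.det ∧ Gᵀ * G = U * (Dᵀ * D) * V := by
  set DY : Matrix Y Y ℤ := D.submatrix Subtype.val id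
  have hDY : DY.IsUnitriangular := ⟨fun i j => hD0 i j, hD1⟩
  have hGY : (G.submatrix Subtype.val id).IsUnitriangular := ⟨fun i j => hG0 i j, hG1⟩
  set TZ := DY⁻¹ * G.submatrix Subtype.val id
  have hTZ : TZ.IsUnitriangular := hDY.inv.mul hGY
  have hT_eq : T = TZ.map (Int.castRingHom ℚ) :=
    eq_map_inv_mul_of_map_mul_eq _ hDY.isUnit_det
      (congr_arg (fun M : Matrix X Y ℚ => M.submatrix Subtype.val id) hT).symm
  have hGD : G = D * TZ := Matrix.map_injective (Int.cast_injective (α := ℚ)) <| by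
    change G.map (Int.castRingHom ℚ) = (D * TZ).map (Int.castRingHom ℚ)
    rw [Matrix.map_mul, ← hT_eq]
    exact hT
  subst hT_eq
  refine ⟨fun i j => ⟨TZ i j, rfl⟩, fun i => by simp [hTZ.diag_eq_one i],
    fun i j h => hTZ.le_of_ne_zero (by simpa using h), TZᵀ, TZ, by simpa using hTZ.isUnit_det,
    hTZ.isUnit_det, ?_⟩
  rw [hGD, transpose_mul, Matrix.mul_assoc, Matrix.mul_assoc, Matrix.mul_assoc]
end
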